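/- arXiv:1910.04570 — 6 statements merged into one kernel-verified Lean document; each statement's English description precedes it below -/
import Mathlib

section
/- Let K(z,w) = |w|²/2 - μ|z+1|²/(2|z|³) - (1-μ)|z-1|²/(2|z|³) + f|z-1|²|z+1|²/(4|z|⁴) be the Birkhoff-regularized Hamiltonian of Euler's two-center problem. Then K ∘ Φ (z,w) = |z|⁴ · K(z,w), where Φ(z,w) = (1/z, -z̄² w). -/
/-- The Birkhoff-regularized Hamiltonian of Euler's two-center problem. -/
noncomputable def eulerK (μ f : ℝ) (z w : ℂ) : ℝ :=
  ‖w‖ ^ 2 / 2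
    - μ * ‖z + 1‖ ^ 2 / (2 * ‖z‖ ^ 3)
    - (1 - μ) * ‖z - 1‖ ^ 2 / (2 * ‖z‖ ^ 3)
    + f * ‖z - 1‖ ^ 2 * ‖z + 1‖ ^ 2 / (4 * ‖z‖ ^ 4)

/-- `K ∘ Φ (z,w) = |z|⁴ K(z,w)` for the involution `Φ(z,w) = (1/z, -z̄² w)`. -/
theorem eulerK_comp_Phi (μ f : ℝ) (z w : ℂ) (hz : z ≠ 0) :
    eulerK μ f z⁻¹ (-(starRingEnd ℂ z) ^ 2 * w) = ‖z‖ ^ 4 * eulerK μ f z w := by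
  have ha : ‖z‖ ≠ 0 := by simpa using hz
  have h1 : z⁻¹ + 1 = (z + 1) / z := by field_simp; ring
  have h2 : z⁻¹ - 1 = -(z - 1) / z := by field_simp; ring
  simp only [eulerK, h1, h2, norm_mul, norm_div, norm_neg, norm_inv, norm_pow,
    Complex.norm_conj]
  field_simp
end

section
/- Let K : ℝ/ℤ → ℂ \ {0} be a smooth immersed loop with odd winding number w₀(K) around the origin. Then the preimage of K under the complex square map L(z) = z² is a single immersed loop K̃ (parametrized by a continuous square root traversed over a double period), and its rotation number satisfies r(K̃) = 2·r(K) - w₀(K). -/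
open scoped ContDiff

lemma odd_aux_per_deriv (f : ℝ → ℂ) (hf : ∀ t, f (t + 1) = f t) (t : ℝ) :
    deriv f (t + 1) = deriv f t := by
  have h1 : (fun x => f (x + 1)) = f := funext hf
  rw [← deriv_comp_add_const f 1 t, h1]

/-- A smooth immersed loop `K` in `ℂ \ {0}` with odd winding number `w₀(K)` around the
origin lifts under the square map `L(z) = z²` to a single immersed loop `K̃` of period `2`
(with `K̃(t+1) = -K̃(t)`), whose rotation number satisfies `r(K̃) = 2r(K) - w₀(K)`.
Winding and rotation numbers are encoded via `∮ γ'/γ = 2πi·w₀(γ)` and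
`∮ γ''/γ' = 2πi·r(γ)`. -/
theorem odd_winding_square_lift (K : ℝ → ℂ) (hK : ContDiff ℝ (⊤ : ℕ∞) K)
    (hper : ∀ t, K (t + 1) = K t) (h0 : ∀ t, K t ≠ 0) (himm : ∀ t, deriv K t ≠ 0)
    (w : ℤ) (hw : Odd w)
    (hwdef : (∫ t in (0:ℝ)..1, deriv K t / K t)
      = 2 * (Real.pi : ℂ) * Complex.I * (w : ℂ)) :
    ∃ Kt : ℝ → ℂ, ContDiff ℝ (⊤ : ℕ∞) Kt ∧ (∀ t, Kt t ^ 2 = K t) ∧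
      (∀ t, Kt (t + 1) = -Kt t) ∧ (∀ t, Kt (t + 2) = Kt t) ∧
      (∀ t, Kt t ≠ 0) ∧ (∀ t, deriv Kt t ≠ 0) ∧
      ∀ r : ℤ,
        (∫ t in (0:ℝ)..1, deriv (deriv K) t / deriv K t)
          = 2 * (Real.pi : ℂ) * Complex.I * (r : ℂ) →
        (∫ t in (0:ℝ)..2, deriv (deriv Kt) t / deriv Kt t)
          = 2 * (Real.pi : ℂ) * Complex.I * ((2 * r - w : ℤ) : ℂ) := by
  have hKi : ContDiff ℝ ∞ K := hK.of_le (by simp)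
  have hKd : Differentiable ℝ K := hK.differentiable (by simp)
  have hK' : ContDiff ℝ ∞ (deriv K) := (contDiff_infty_iff_deriv.mp hKi).2
  set h : ℝ → ℂ := fun t => deriv K t / K t with hh_def
  have hh : ContDiff ℝ ∞ h := by
    have e : h = fun x => deriv K x * (K x)⁻¹ := by
      funext x
      simp only [hh_def, div_eq_mul_inv]
    rw [e]
    exact hK'.mul (hKi.inv h0)
  have hhc : Continuous h := hh.continuous
  have hhne : ∀ t, h t ≠ 0 := fun t => div_ne_zero (himm t) (h0 t)
  set F : ℝ → ℂ := fun t => ∫ s in (0:ℝ)..t, h s with hF_def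
  have hF : ∀ t, HasDerivAt F (h t) t := fun t => (hhc.integral_hasStrictDerivAt 0 t).hasDerivAt
  have hFd : Differentiable ℝ F := fun t => (hF t).differentiableAt
  have hderivF : deriv F = h := funext fun t => (hF t).deriv
  have hFs : ContDiff ℝ ∞ F := contDiff_infty_iff_deriv.mpr ⟨hFd, hderivF ▸ hh⟩
  have hperh : Function.Periodic h 1 := fun t => by
    simp only [hh_def, odd_aux_per_deriv K hper t, hper t]
  -- F shift
  have hhint : ∀ a b : ℝ, IntervalIntegrable h MeasureTheory.volume a b :=
    fun a b => hhc.intervalIntegrable a b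
  have hFshift : ∀ t, F (t + 1) = F t + 2 * (Real.pi : ℂ) * Complex.I * (w : ℂ) := by
    intro t
    have h1 : F (t + 1) = F t + ∫ s in t..(t+1), h s := by
      rw [hF_def]
      exact (intervalIntegral.integral_add_adjacent_intervals (hhint 0 t) (hhint t (t+1))).symm
    have h2 : (∫ s in t..(t+1), h s) = ∫ s in (0:ℝ)..(0+1), h s :=
      hperh.intervalIntegral_add_eq t 0
    rw [h1, h2]
    norm_num
    rw [hwdef]
  -- K t = K 0 * exp (F t)
  have hKF : ∀ t, K t = K 0 * Complex.exp (F t) := by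
    have key : ∀ t, K t * Complex.exp (-F t) = K 0 * Complex.exp (-F 0) := by
      intro t
      set G : ℝ → ℂ := fun t => K t * Complex.exp (-F t) with hG_def
      have hGd : ∀ s, HasDerivAt G (deriv K s * Complex.exp (-F s)
          + K s * (Complex.exp (-F s) * (-h s))) s := by
        intro s
        exact ((hKd s).hasDerivAt).mul ((hF s).neg.cexp)
      have hG0 : ∀ s, deriv G s = 0 := by
        intro s
        rw [(hGd s).deriv]
        have : K s * h s = deriv K s := by
          simp only [hh_def]
          rw [mul_comm]
          exact div_mul_cancel₀ _ (h0 s)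
        rw [mul_comm (Complex.exp (-F s)) (-h s), ← mul_assoc, mul_neg, this]
        ring
      exact is_const_of_deriv_eq_zero (fun s => (hGd s).differentiableAt) hG0 t 0
    intro t
    have h1 := key t
    have hF0 : F 0 = 0 := intervalIntegral.integral_same
    rw [hF0] at h1
    simp only [neg_zero, Complex.exp_zero, mul_one] at h1
    have : K t = K 0 * Complex.exp (F t) := by
      have := congrArg (fun z => z * Complex.exp (F t)) h1
      simpa [mul_assoc, ← Complex.exp_add] using this
    exact this
  -- the lift
  set c : ℂ := Complex.exp (Complex.log (K 0) / 2) with hc_def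
  have hc2 : c ^ 2 = K 0 := by
    rw [hc_def, sq, ← Complex.exp_add, add_halves, Complex.exp_log (h0 0)]
  set Kt : ℝ → ℂ := fun t => c * Complex.exp (F t / 2) with hKt_def
  have hc0 : c ≠ 0 := Complex.exp_ne_zero _
  have hKtne : ∀ t, Kt t ≠ 0 := fun t => mul_ne_zero hc0 (Complex.exp_ne_zero _)
  have hKt2 : ∀ t, Kt t ^ 2 = K t := by
    intro t
    rw [hKt_def]
    simp only
    rw [mul_pow, hc2, sq, ← Complex.exp_add, add_halves, ← hKF t]
  have hKtper : ∀ t, Kt (t + 1) = -Kt t := by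
    intro t
    rw [hKt_def]
    simp only
    rw [hFshift t]
    have : (F t + 2 * (Real.pi : ℂ) * Complex.I * (w : ℂ)) / 2
        = F t / 2 + (w : ℂ) * ((Real.pi : ℂ) * Complex.I) := by ring
    rw [this, Complex.exp_add, Complex.exp_int_mul, Complex.exp_pi_mul_I, hw.neg_one_zpow]
    ring
  have hKtper2 : ∀ t, Kt (t + 2) = Kt t := by
    intro t
    have : t + 2 = (t + 1) + 1 := by ring
    rw [this, hKtper, hKtper, neg_neg]
  have hKtD : ∀ t, HasDerivAt Kt (Kt t * (h t / 2)) t := by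
    intro t
    have := (((hF t).div_const 2).cexp).const_mul c
    have e : Kt t * (h t / 2) = c * (Complex.exp (F t / 2) * (h t / 2)) := by
      simp only [hKt_def]
      ring
    rw [e]
    exact this
  have hderivKt : deriv Kt = fun t => Kt t * (h t / 2) := funext fun t => (hKtD t).deriv
  have hKtderivne : ∀ t, deriv Kt t ≠ 0 := by
    intro t
    rw [hderivKt]
    exact mul_ne_zero (hKtne t) (div_ne_zero (hhne t) two_ne_zero)
  have hKtsmooth : ContDiff ℝ ∞ Kt := by
    rw [hKt_def]
    have he : ContDiff ℝ ∞ (Complex.exp) := (Complex.contDiff_exp (𝕜 := ℂ)).restrict_scalars ℝ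
    exact contDiff_const.mul (he.comp (hFs.div_const 2))
  have hKtomega : ContDiff ℝ (⊤ : ℕ∞) Kt := hKtsmooth
  -- derivative of h
  have hhd : Differentiable ℝ h := hh.differentiable (by simp)
  have hdch : Continuous (deriv h) := ((contDiff_infty_iff_deriv.mp hh).2).continuous
  have hKdd : Differentiable ℝ (deriv K) := hK'.differentiable (by simp)
  have hK''c : Continuous (deriv (deriv K)) := ((contDiff_infty_iff_deriv.mp hK').2).continuous
  -- second derivative of Kt
  have hD : ∀ t, HasDerivAt (deriv Kt)
      ((Kt t * (h t / 2)) * (h t / 2) + Kt t * (deriv h t / 2)) t := by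
    intro t
    rw [hderivKt]
    exact (hKtD t).mul ((hhd t).hasDerivAt.div_const 2)
  have hratio : ∀ t, deriv (deriv Kt) t / deriv Kt t = h t / 2 + deriv h t / h t := by
    intro t
    rw [(hD t).deriv, hderivKt]
    simp only
    field_simp [hKtne t, hhne t]
  -- deriv h / h = K''/K' - K'/K
  have hderivh : ∀ t, deriv h t
      = (deriv (deriv K) t * K t - deriv K t * deriv K t) / K t ^ 2 := by
    intro t
    have : HasDerivAt h ((deriv (deriv K) t * K t - deriv K t * deriv K t) / K t ^ 2) t := by
      rw [hh_def]
      exact ((hKdd t).hasDerivAt).div ((hKd t).hasDerivAt) (h0 t)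
    exact this.deriv
  have hsplit : ∀ t, deriv h t / h t
      = deriv (deriv K) t / deriv K t - deriv K t / K t := by
    intro t
    rw [hderivh t, hh_def]
    simp only
    field_simp [h0 t, himm t]
  -- periodicity of deriv h / h
  have hperp : Function.Periodic (fun t => deriv h t / h t) 1 := fun t => by
    simp only [odd_aux_per_deriv h hperh t, hperh t]
  refine ⟨Kt, hKtomega, hKt2, hKtper, hKtper2, hKtne, hKtderivne, ?_⟩
  intro r hrdef
  have hpc : Continuous (fun t => deriv h t / h t) := hdch.div hhc hhne
  have h2c : Continuous (fun t => h t / 2) := hhc.div_const 2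
  -- ∫₀¹ h = 2πi w
  have hint1 : (∫ t in (0:ℝ)..1, h t) = 2 * (Real.pi : ℂ) * Complex.I * (w : ℂ) := hwdef
  -- ∫₀¹ deriv h / h = 2πi r - 2πi w
  have hint2 : (∫ t in (0:ℝ)..1, deriv h t / h t)
      = 2 * (Real.pi : ℂ) * Complex.I * (r : ℂ) - 2 * (Real.pi : ℂ) * Complex.I * (w : ℂ) := by
    simp only [hsplit]
    have hsub : (∫ t in (0:ℝ)..1, (deriv (deriv K) t / deriv K t - deriv K t / K t))
        = (∫ t in (0:ℝ)..1, deriv (deriv K) t / deriv K t)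
          - ∫ t in (0:ℝ)..1, deriv K t / K t :=
      intervalIntegral.integral_sub
        ((hK''c.div (hK'.continuous) himm).intervalIntegrable 0 1)
        (hhc.intervalIntegrable 0 1)
    rw [hsub, hrdef]
    congr 1
  -- doubling lemma
  have hdouble : ∀ (f : ℝ → ℂ), Continuous f → Function.Periodic f 1 →
      (∫ t in (0:ℝ)..2, f t) = 2 * ∫ t in (0:ℝ)..1, f t := by
    intro f hfc hfp
    have ha : (∫ t in (0:ℝ)..2, f t) = (∫ t in (0:ℝ)..1, f t) + ∫ t in (1:ℝ)..2, f t :=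
      (intervalIntegral.integral_add_adjacent_intervals (hfc.intervalIntegrable 0 1)
        (hfc.intervalIntegrable 1 2)).symm
    have hb : (∫ t in (1:ℝ)..2, f t) = ∫ t in (0:ℝ)..1, f t := by
      have := hfp.intervalIntegral_add_eq 1 0
      norm_num at this
      exact this
    rw [ha, hb]
    ring
  calc (∫ t in (0:ℝ)..2, deriv (deriv Kt) t / deriv Kt t)
      = ∫ t in (0:ℝ)..2, (h t / 2 + deriv h t / h t) := by simp only [hratio]
    _ = (∫ t in (0:ℝ)..2, h t / 2) + ∫ t in (0:ℝ)..2, deriv h t / h t := by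
        rw [intervalIntegral.integral_add (h2c.intervalIntegrable 0 2)
          (hpc.intervalIntegrable 0 2)]
    _ = 2 * (∫ t in (0:ℝ)..1, h t / 2) + 2 * ∫ t in (0:ℝ)..1, deriv h t / h t := by
        rw [hdouble _ h2c (fun t => by simp only [hperh t]), hdouble _ hpc hperp]
    _ = (∫ t in (0:ℝ)..1, h t) + 2 * ∫ t in (0:ℝ)..1, deriv h t / h t := by
        rw [intervalIntegral.integral_div]
        ring
    _ = 2 * (Real.pi : ℂ) * Complex.I * ((2 * r - w : ℤ) : ℂ) := by
        rw [hint1, hint2]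
        push_cast
        ring
end

section
/- Let K : ℝ/ℤ → ℂ \ {0} be a smooth immersed loop with even winding number w₀(K) around the origin. Then K admits a lift K̃ : ℝ/ℤ → ℂ \ {0} with K̃(t)² = K(t) (a connected component of the preimage under z ↦ z²), and its rotation number satisfies r(K̃) = r(K) - w₀(K)/2. -/
/-- A smooth immersed loop `K` in `ℂ \ {0}` with even winding number `w₀(K) = 2v` around
the origin lifts under the square map `L(z) = z²` to a closed immersed loop `K̃` of
period `1` with `K̃² = K`, whose winding number is `w₀(K̃) = w₀(K)/2 = v` and whose
rotation number satisfies `r(K̃) = r(K) - w₀(K)/2`. Winding and rotation numbers are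
encoded via `∮ γ'/γ = 2πi·w₀(γ)` and `∮ γ''/γ' = 2πi·r(γ)`. -/
theorem even_winding_square_lift (K : ℝ → ℂ) (hK : ContDiff ℝ (⊤ : ℕ∞) K)
    (hper : ∀ t, K (t + 1) = K t) (h0 : ∀ t, K t ≠ 0) (himm : ∀ t, deriv K t ≠ 0)
    (w v : ℤ) (hv : w = 2 * v)
    (hwdef : (∫ t in (0:ℝ)..1, deriv K t / K t)
      = 2 * (Real.pi : ℂ) * Complex.I * (w : ℂ)) :
    ∃ Kt : ℝ → ℂ, ContDiff ℝ (⊤ : ℕ∞) Kt ∧ (∀ t, Kt t ^ 2 = K t) ∧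
      (∀ t, Kt (t + 1) = Kt t) ∧ (∀ t, Kt t ≠ 0) ∧ (∀ t, deriv Kt t ≠ 0) ∧
      (∫ t in (0:ℝ)..1, deriv Kt t / Kt t)
        = 2 * (Real.pi : ℂ) * Complex.I * (v : ℂ) ∧
      ∀ r : ℤ,
        (∫ t in (0:ℝ)..1, deriv (deriv K) t / deriv K t)
          = 2 * (Real.pi : ℂ) * Complex.I * (r : ℂ) →
        (∫ t in (0:ℝ)..1, deriv (deriv Kt) t / deriv Kt t)
          = 2 * (Real.pi : ℂ) * Complex.I * ((r - v : ℤ) : ℂ) := by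
  have hKd : Differentiable ℝ K := hK.differentiable (by simp)
  have hK' : ContDiff ℝ (⊤ : ℕ∞) (deriv K) := (contDiff_infty_iff_deriv.mp hK).2
  have hK'd : Differentiable ℝ (deriv K) := hK'.differentiable (by simp)
  have hK'c : Continuous (deriv K) := hK'.continuous
  have hK''c : Continuous (deriv (deriv K)) := (contDiff_infty_iff_deriv.mp hK').2.continuous
  set g : ℝ → ℂ := fun t => deriv K t / K t with hg_def
  have hgc : Continuous g := hK'c.div₀ hKd.continuous h0
  -- periodicity of g
  have hperK' : ∀ t, deriv K (t + 1) = deriv K t := by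
    intro t
    have h1 : deriv (fun s => K (s + 1)) t = deriv K (t + 1) := by
      simpa using deriv_comp_add_const K 1 t
    rw [← h1]
    congr 1
    funext s; exact hper s
  have hperg : Function.Periodic g 1 := fun t => by
    simp only [hg_def, hperK' t, hper t]
  -- F = primitive of g
  set F : ℝ → ℂ := fun u => ∫ s in (0:ℝ)..u, g s with hF_def
  have hF : ∀ t, HasDerivAt F (g t) t := fun t =>
    (hgc.integral_hasStrictDerivAt 0 t).hasDerivAt
  have hFd : Differentiable ℝ F := fun t => (hF t).differentiableAt
  have hgint : ∀ a b : ℝ, IntervalIntegrable g MeasureTheory.volume a b :=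
    fun a b => hgc.intervalIntegrable a b
  have hF1 : F 1 = 2 * (Real.pi : ℂ) * Complex.I * (w : ℂ) := hwdef
  have hFper : ∀ t, F (t + 1) = F t + 2 * (Real.pi : ℂ) * Complex.I * (w : ℂ) := by
    intro t
    have h2 := hperg.intervalIntegral_add_eq_add 0 t hgint
    simp only [zero_add] at h2
    rw [hF_def]
    simp only [h2]
    rw [← hF1]
  -- K t = K 0 * exp (F t)
  have hKF : ∀ t, K t = K 0 * Complex.exp (F t) := by
    intro t
    have hconst : ∀ x y : ℝ, K x * Complex.exp (-F x) = K y * Complex.exp (-F y) := by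
      intro x y
      apply is_const_of_deriv_eq_zero (f := fun s => K s * Complex.exp (-F s))
      · exact hKd.mul ((Complex.differentiable_exp.comp hFd.neg).restrictScalars ℝ)
      · intro s
        have h1 : HasDerivAt (fun u => Complex.exp (-F u)) (Complex.exp (-F s) * (-g s)) s :=
          (Complex.hasDerivAt_exp (-F s)).comp s (hF s).neg
        have h2 : HasDerivAt (fun u => K u * Complex.exp (-F u))
            (deriv K s * Complex.exp (-F s) + K s * (Complex.exp (-F s) * (-g s))) s :=
          (hKd s).hasDerivAt.mul h1
        rw [h2.deriv]
        have hKn := h0 s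
        simp only [hg_def]
        field_simp
        ring
    have h3 := hconst t 0
    have h4 : F 0 = 0 := intervalIntegral.integral_same
    rw [h4, neg_zero, Complex.exp_zero, mul_one] at h3
    rw [← h3, mul_assoc, ← Complex.exp_add, neg_add_cancel, Complex.exp_zero, mul_one]
  -- the lift
  set Kt : ℝ → ℂ := fun t => Complex.exp (Complex.log (K 0) / 2 + F t / 2) with hKt_def
  have hKtne : ∀ t, Kt t ≠ 0 := fun t => Complex.exp_ne_zero _
  have hKtsq : ∀ t, Kt t ^ 2 = K t := by
    intro t
    rw [hKt_def]
    simp only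
    rw [sq, ← Complex.exp_add]
    rw [show Complex.log (K 0) / 2 + F t / 2 + (Complex.log (K 0) / 2 + F t / 2)
        = Complex.log (K 0) + F t by ring]
    rw [Complex.exp_add, Complex.exp_log (h0 0)]
    exact (hKF t).symm
  have hKtc : ContDiff ℝ (⊤ : ℕ∞) Kt := by
    have hgs : ContDiff ℝ (⊤ : ℕ∞) g := by
      have h := hK'.mul (hK.inv h0)
      simp only [Pi.inv_apply, ← div_eq_mul_inv] at h
      exact h
    have hFs : ContDiff ℝ (⊤ : ℕ∞) F := contDiff_infty_iff_deriv.mpr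
      ⟨hFd, by rw [show deriv F = g from funext fun t => (hF t).deriv]; exact hgs⟩
    exact (contDiff_const.add (hFs.div_const 2)).cexp
  have hKt' : ∀ t, HasDerivAt Kt (Kt t * (g t / 2)) t := by
    intro t
    have h1 : HasDerivAt (fun u => Complex.log (K 0) / 2 + F u / 2) (g t / 2) t :=
      ((hF t).div_const 2).const_add (Complex.log (K 0) / 2)
    exact (Complex.hasDerivAt_exp _).comp t h1
  have hKtderiv : deriv Kt = fun t => Kt t * (g t / 2) := funext fun t => (hKt' t).deriv
  have hKtdne : ∀ t, deriv Kt t ≠ 0 := by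
    intro t
    rw [hKtderiv]
    exact mul_ne_zero (hKtne t) (div_ne_zero (div_ne_zero (himm t) (h0 t)) two_ne_zero)
  have hKtper : ∀ t, Kt (t + 1) = Kt t := by
    intro t
    rw [hKt_def]
    simp only
    rw [hFper t]
    rw [show Complex.log (K 0) / 2 + (F t + 2 * (Real.pi:ℂ) * Complex.I * (w:ℂ)) / 2
        = (Complex.log (K 0) / 2 + F t / 2) + (w:ℂ) * ((Real.pi:ℂ) * Complex.I) by ring]
    rw [Complex.exp_add, hv]
    push_cast
    rw [show ((2:ℂ) * (v:ℂ)) * ((Real.pi:ℂ) * Complex.I)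
        = (v:ℂ) * (2 * (Real.pi:ℂ) * Complex.I) by ring]
    rw [Complex.exp_int_mul_two_pi_mul_I]
    ring
  -- winding integral
  have hwind : (∫ t in (0:ℝ)..1, deriv Kt t / Kt t)
      = 2 * (Real.pi : ℂ) * Complex.I * (v : ℂ) := by
    have h4 : ∀ t, deriv Kt t / Kt t = g t / 2 := by
      intro t
      rw [hKtderiv]
      exact mul_div_cancel_left₀ _ (hKtne t)
    simp only [h4]
    rw [intervalIntegral.integral_div]
    rw [show (∫ t in (0:ℝ)..1, g t) = 2 * (Real.pi : ℂ) * Complex.I * (w : ℂ) from hwdef]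
    rw [hv]; push_cast; ring
  refine ⟨Kt, hKtc, hKtsq, hKtper, hKtne, hKtdne, hwind, ?_⟩
  -- rotation number
  intro r hr
  have hg' : ∀ t, HasDerivAt g
      ((deriv (deriv K) t * K t - deriv K t * deriv K t) / K t ^ 2) t := by
    intro t
    exact ((hK'd t).hasDerivAt).div (hKd t).hasDerivAt (h0 t)
  have hH : ∀ t, HasDerivAt (deriv Kt)
      (Kt t * (g t / 2) * (g t / 2)
        + Kt t * (((deriv (deriv K) t * K t - deriv K t * deriv K t) / K t ^ 2) / 2)) t := by
    intro t
    rw [hKtderiv]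
    exact (hKt' t).mul ((hg' t).div_const 2)
  have hkey : ∀ t, deriv (deriv Kt) t / deriv Kt t
      = deriv (deriv K) t / deriv K t - (deriv K t / K t) / 2 := by
    intro t
    rw [(hH t).deriv, hKtderiv]
    have hKtn := hKtne t
    have hKn := h0 t
    have hK'n := himm t
    rw [div_eq_iff (mul_ne_zero hKtn (div_ne_zero (div_ne_zero hK'n hKn) two_ne_zero))]
    simp only [hg_def]
    field_simp
    ring
  simp only [hkey]
  have hi1 : IntervalIntegrable (fun t => deriv (deriv K) t / deriv K t)
      MeasureTheory.volume 0 1 :=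
    (hK''c.div₀ hK'c himm).intervalIntegrable 0 1
  have hi2 : IntervalIntegrable (fun t => (deriv K t / K t) / 2) MeasureTheory.volume 0 1 :=
    (hgc.div_const 2).intervalIntegrable 0 1
  rw [intervalIntegral.integral_sub hi1 hi2, hr, intervalIntegral.integral_div, hwdef, hv]
  push_cast
  ring
end

section
/- Let K be a smooth loop in ℂ \ {-1, 1} transverse to the ray (1, ∞), and suppose w₋₁(K) + w₁(K) is even, so that K lifts under the Birkhoff map B(z) = (z+1/z)/2 to a closed loop K̃ in ℂ \ {0}. Then the winding number of K̃ around 0 is congruent to w₁(K) modulo 2. If instead w₋₁(K) + w₁(K) is odd, then the (connected, doubly-traversed-period) lift has winding number 0 around the origin. -/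
open intervalIntegral Complex

lemma two_pi_I_ne : (2 * (Real.pi:ℂ) * Complex.I) ≠ 0 := by
  simp [Real.pi_ne_zero, Complex.I_ne_zero, Complex.ofReal_eq_zero]

lemma winding_int (f : ℝ → ℂ) (hf : ContDiff ℝ 1 f) (h0 : ∀ t, f t ≠ 0)
    (hper : f 1 = f 0) :
    ∃ n : ℤ, (∫ t in (0:ℝ)..1, deriv f t / f t) = 2 * (Real.pi:ℂ) * Complex.I * n := by
  set g : ℝ → ℂ := fun t => deriv f t / f t with hg
  have hgc : Continuous g := (hf.continuous_deriv le_rfl).div hf.continuous h0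
  set F : ℝ → ℂ := fun t => ∫ s in (0:ℝ)..t, g s with hF
  have hFd : ∀ t, HasDerivAt F (g t) t := fun t =>
    integral_hasDerivAt_right (hgc.intervalIntegrable _ _)
      (hgc.stronglyMeasurableAtFilter _ _) hgc.continuousAt
  have hfd : ∀ t, HasDerivAt f (deriv f t) t :=
    fun t => (hf.differentiable one_ne_zero t).hasDerivAt
  have hhd : ∀ t, HasDerivAt (fun t => Complex.exp (-F t) * f t)
      (Complex.exp (-F t) * (-g t) * f t + Complex.exp (-F t) * deriv f t) t :=
    fun t => ((hFd t).neg.cexp).mul (hfd t)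
  have hconst : Complex.exp (-F 1) * f 1 = Complex.exp (-F 0) * f 0 := by
    apply is_const_of_deriv_eq_zero (fun t => (hhd t).differentiableAt)
    intro t
    rw [(hhd t).deriv]
    have hgt : g t * f t = deriv f t := div_mul_cancel₀ _ (h0 t)
    rw [show Complex.exp (-F t) * (-g t) * f t
        = -(Complex.exp (-F t) * (g t * f t)) by ring, hgt]
    ring
  have hF0 : F 0 = 0 := by simp [hF]
  rw [hF0, hper, neg_zero, Complex.exp_zero, one_mul] at hconst
  have hexp : Complex.exp (-F 1) = 1 := by
    exact mul_right_cancel₀ (h0 0) (by rw [hconst, one_mul])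
  have hone : Complex.exp (F 1) = 1 := by
    have := congrArg (· * Complex.exp (F 1)) hexp
    simpa [← Complex.exp_add] using this.symm
  obtain ⟨n, hn⟩ := Complex.exp_eq_one_iff.mp hone
  exact ⟨n, by rw [show (∫ t in (0:ℝ)..1, deriv f t / f t) = F 1 from rfl, hn]; ring⟩

lemma key_alg (z d : ℂ) (hz : z ≠ 0) (h1 : z + 1 ≠ 0) :
    ((d + -d / z^2)/2) / ((z + z⁻¹)/2 + 1) = 2*d/(z+1) - d/z := by
  have hs : (z + z⁻¹)/2 + 1 = (z+1)^2 / (2*z) := by field_simp; ring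
  rw [hs]
  field_simp
  ring

lemma key_alg2 (z d : ℂ) (hz : z ≠ 0) (h1 : z - 1 ≠ 0) :
    ((d + -d / z^2)/2) / ((z + z⁻¹)/2 - 1) = 2*d/(z-1) - d/z := by
  have hs : (z + z⁻¹)/2 - 1 = (z-1)^2 / (2*z) := by field_simp; ring
  rw [hs]
  field_simp
  ring

lemma lift_relation (K Kt : ℝ → ℂ) (hKt : ContDiff ℝ (⊤ : ℕ∞) Kt) (h0 : ∀ t, Kt t ≠ 0)
    (h1 : ∀ t, Kt t ≠ 1) (hm1 : ∀ t, Kt t ≠ -1)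
    (hB : ∀ t, (Kt t + (Kt t)⁻¹) / 2 = K t)
    (hper : Kt 1 = Kt 0) (wE wM : ℤ)
    (hwE : (∫ t in (0:ℝ)..1, deriv K t / (K t + 1))
      = 2 * (Real.pi : ℂ) * Complex.I * (wE : ℂ))
    (hwM : (∫ t in (0:ℝ)..1, deriv K t / (K t - 1))
      = 2 * (Real.pi : ℂ) * Complex.I * (wM : ℂ)) :
    ∃ a b n : ℤ, (∫ t in (0:ℝ)..1, deriv Kt t / Kt t)
      = 2 * (Real.pi : ℂ) * Complex.I * (n : ℂ) ∧ wE = 2*a - n ∧ wM = 2*b - n := by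
  have hKt1 : ContDiff ℝ 1 Kt := hKt.of_le (by simp)
  have hdiff : ∀ t, HasDerivAt Kt (deriv Kt t) t :=
    fun t => (hKt1.differentiable one_ne_zero t).hasDerivAt
  have hKfun : K = fun t => (Kt t + (Kt t)⁻¹)/2 := funext fun t => (hB t).symm
  have hderivK : ∀ t, deriv K t = (deriv Kt t + -(deriv Kt t) / (Kt t)^2) / 2 := by
    intro t
    rw [hKfun]
    have h2 : HasDerivAt (fun s => (Kt s)⁻¹) (-(deriv Kt t) / (Kt t)^2) t := by
      have h2' := (hasDerivAt_inv (h0 t)).comp t (hdiff t)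
      convert h2' using 1
      case e'_4 => rfl
      case e'_8 => rfl
      case e'_9 => ring
    have h3 : HasDerivAt (fun s => (Kt s + (Kt s)⁻¹)/2)
        ((deriv Kt t + -(deriv Kt t) / (Kt t)^2) / 2) t := ((hdiff t).add h2).div_const 2
    exact h3.deriv
  have hp1 : ∀ t, Kt t + 1 ≠ 0 := fun t h => hm1 t (by linear_combination h)
  have hs1 : ∀ t, Kt t - 1 ≠ 0 := fun t h => h1 t (by linear_combination h)
  have hcD : Continuous (deriv Kt) := hKt1.continuous_deriv le_rfl
  have hcKt : Continuous Kt := hKt1.continuous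
  have hint0 : IntervalIntegrable (fun t => deriv Kt t / Kt t)
      MeasureTheory.volume 0 1 := (hcD.div hcKt h0).intervalIntegrable _ _
  have hintE : IntervalIntegrable (fun t => 2 * deriv Kt t / (Kt t + 1))
      MeasureTheory.volume 0 1 :=
    ((continuous_const.mul hcD).div (hcKt.add continuous_const) hp1).intervalIntegrable _ _
  have hintM : IntervalIntegrable (fun t => 2 * deriv Kt t / (Kt t - 1))
      MeasureTheory.volume 0 1 :=
    ((continuous_const.mul hcD).div (hcKt.sub continuous_const) hs1).intervalIntegrable _ _
  -- winding numbers of the lift around -1, 1, 0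
  obtain ⟨a, ha⟩ := winding_int (fun t => Kt t + 1) (hKt1.add contDiff_const)
    hp1 (by simp [hper])
  obtain ⟨b, hb⟩ := winding_int (fun t => Kt t - 1) (hKt1.sub contDiff_const)
    hs1 (by simp [hper])
  obtain ⟨n, hn⟩ := winding_int Kt hKt1 h0 hper
  have ha' : (∫ t in (0:ℝ)..1, deriv Kt t / (Kt t + 1))
      = 2 * (Real.pi : ℂ) * Complex.I * (a : ℂ) := by
    rw [← ha]
    apply intervalIntegral.integral_congr
    intro t _
    simp only [deriv_add_const]
  have hb' : (∫ t in (0:ℝ)..1, deriv Kt t / (Kt t - 1))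
      = 2 * (Real.pi : ℂ) * Complex.I * (b : ℂ) := by
    rw [← hb]
    apply intervalIntegral.integral_congr
    intro t _
    simp only [deriv_sub_const]
  -- pointwise identities
  have hptE : ∀ t, deriv K t / (K t + 1)
      = 2 * deriv Kt t / (Kt t + 1) - deriv Kt t / Kt t := by
    intro t
    rw [hderivK t, ← hB t]
    exact key_alg (Kt t) (deriv Kt t) (h0 t) (hp1 t)
  have hptM : ∀ t, deriv K t / (K t - 1)
      = 2 * deriv Kt t / (Kt t - 1) - deriv Kt t / Kt t := by
    intro t
    rw [hderivK t, ← hB t]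
    exact key_alg2 (Kt t) (deriv Kt t) (h0 t) (hs1 t)
  have hIE : (∫ t in (0:ℝ)..1, deriv K t / (K t + 1))
      = 2 * (Real.pi : ℂ) * Complex.I * ((2*a - n : ℤ) : ℂ) := by
    rw [intervalIntegral.integral_congr (g := fun t =>
        2 * deriv Kt t / (Kt t + 1) - deriv Kt t / Kt t) (fun t _ => hptE t),
      intervalIntegral.integral_sub hintE hint0]
    have : (∫ t in (0:ℝ)..1, 2 * deriv Kt t / (Kt t + 1))
        = 2 * ∫ t in (0:ℝ)..1, deriv Kt t / (Kt t + 1) := by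
      rw [← intervalIntegral.integral_const_mul]
      apply intervalIntegral.integral_congr
      intro t _
      ring
    rw [this, ha', hn]
    push_cast
    ring
  have hIM : (∫ t in (0:ℝ)..1, deriv K t / (K t - 1))
      = 2 * (Real.pi : ℂ) * Complex.I * ((2*b - n : ℤ) : ℂ) := by
    rw [intervalIntegral.integral_congr (g := fun t =>
        2 * deriv Kt t / (Kt t - 1) - deriv Kt t / Kt t) (fun t _ => hptM t),
      intervalIntegral.integral_sub hintM hint0]
    have : (∫ t in (0:ℝ)..1, 2 * deriv Kt t / (Kt t - 1))
        = 2 * ∫ t in (0:ℝ)..1, deriv Kt t / (Kt t - 1) := by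
      rw [← intervalIntegral.integral_const_mul]
      apply intervalIntegral.integral_congr
      intro t _
      ring
    rw [this, hb', hn]
    push_cast
    ring
  refine ⟨a, b, n, hn, ?_, ?_⟩
  · have := hwE.symm.trans hIE
    exact_mod_cast mul_left_cancel₀ two_pi_I_ne this
  · have := hwM.symm.trans hIM
    exact_mod_cast mul_left_cancel₀ two_pi_I_ne this

/-- Winding number of a Birkhoff lift around the origin. Let `K` be a smooth loop in
`ℂ \ {-1, 1}` transverse to the ray `(1, ∞)`, with winding numbers `w₋₁, w₁` around
`∓1` (encoded via `∮ K'/(K±1) = 2πi·w∓₁`). (a) If `w₋₁ + w₁` is odd, any (connected,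
period-2) lift `K̃` of `K` under the Birkhoff map `B(z) = (z+1/z)/2` has winding number
`0` around the origin. (b) If `w₋₁ + w₁` is even, any closed (period-1) lift `K̃` has
winding number around `0` congruent to `w₁` and to `w₋₁` modulo `2`. -/
theorem birkhoff_lift_winding (K : ℝ → ℂ) (hK : ContDiff ℝ (⊤ : ℕ∞) K)
    (hper : ∀ t, K (t + 1) = K t) (hE : ∀ t, K t ≠ -1) (hM : ∀ t, K t ≠ 1)
    (htrans : ∀ t, (K t).im = 0 → 1 < (K t).re → (deriv K t).im ≠ 0)
    (wE wM : ℤ)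
    (hwE : (∫ t in (0:ℝ)..1, deriv K t / (K t + 1))
      = 2 * (Real.pi : ℂ) * Complex.I * (wE : ℂ))
    (hwM : (∫ t in (0:ℝ)..1, deriv K t / (K t - 1))
      = 2 * (Real.pi : ℂ) * Complex.I * (wM : ℂ)) :
    (Odd (wE + wM) → ∀ Kt : ℝ → ℂ, ContDiff ℝ (⊤ : ℕ∞) Kt → (∀ t, Kt t ≠ 0) →
      (∀ t, (Kt t + (Kt t)⁻¹) / 2 = K t) → (∀ t, Kt (t + 2) = Kt t) →
      ∀ wt : ℤ, (∫ t in (0:ℝ)..2, deriv Kt t / Kt t)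
          = 2 * (Real.pi : ℂ) * Complex.I * (wt : ℂ) → wt = 0) ∧
    (Even (wE + wM) → ∀ Kt : ℝ → ℂ, ContDiff ℝ (⊤ : ℕ∞) Kt → (∀ t, Kt t ≠ 0) →
      (∀ t, (Kt t + (Kt t)⁻¹) / 2 = K t) → (∀ t, Kt (t + 1) = Kt t) →
      ∀ wt : ℤ, (∫ t in (0:ℝ)..1, deriv Kt t / Kt t)
          = 2 * (Real.pi : ℂ) * Complex.I * (wt : ℂ) →
        wt % 2 = wM % 2 ∧ wt % 2 = wE % 2) := by
  constructor
  · -- odd case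
    intro hodd Kt hKtc h0 hB hper2 wt hwt
    have h1 : ∀ t, Kt t ≠ 1 := fun t h => hM t (by rw [← hB t, h]; norm_num)
    have hm1 : ∀ t, Kt t ≠ -1 := fun t h => hE t (by rw [← hB t, h]; norm_num)
    have hKt1 : ContDiff ℝ 1 Kt := hKtc.of_le (by simp)
    have hdiff : ∀ t, HasDerivAt Kt (deriv Kt t) t :=
      fun t => (hKt1.differentiable one_ne_zero t).hasDerivAt
    -- dichotomy at each time
    have key : ∀ (w z : ℂ), w ≠ 0 → z ≠ 0 → (w + w⁻¹)/2 = (z + z⁻¹)/2 →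
        w = z ∨ w = z⁻¹ := by
      intro w z hw hz h
      have e1 : w * w⁻¹ = 1 := mul_inv_cancel₀ hw
      have e2 : z * z⁻¹ = 1 := mul_inv_cancel₀ hz
      have h3 : (w - z) * (w * z - 1) = 0 := by
        linear_combination 2*w*z*h - z*e1 + w*e2
      rcases mul_eq_zero.mp h3 with h4 | h4
      · exact Or.inl (sub_eq_zero.mp h4)
      · exact Or.inr (eq_inv_of_mul_eq_one_left (by linear_combination h4))
    have hcover : ∀ t, Kt (t+1) = Kt t ∨ Kt (t+1) = (Kt t)⁻¹ := by
      intro t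
      apply key _ _ (h0 (t+1)) (h0 t)
      rw [hB (t+1), hB t, hper t]
    have hdisj : ∀ t, Kt (t+1) = Kt t → Kt (t+1) = (Kt t)⁻¹ → False := by
      intro t ha hb
      have hz := h0 t
      have : (Kt t - 1) * (Kt t + 1) = 0 := by
        have hzz : Kt t = (Kt t)⁻¹ := ha ▸ hb
        have e2 : Kt t * (Kt t)⁻¹ = 1 := mul_inv_cancel₀ hz
        linear_combination Kt t * hzz + e2
      rcases mul_eq_zero.mp this with h4 | h4
      · exact h1 t (by linear_combination h4)
      · exact hm1 t (by linear_combination h4)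
    have hcont1 : Continuous fun t => Kt (t + 1) :=
      hKt1.continuous.comp (continuous_id.add continuous_const)
    have hAclosed : IsClosed {t : ℝ | Kt (t+1) = Kt t} :=
      isClosed_eq hcont1 hKt1.continuous
    have hCclosed : IsClosed {t : ℝ | Kt (t+1) = (Kt t)⁻¹} :=
      isClosed_eq hcont1 (hKt1.continuous.inv₀ h0)
    have hcompl : {t : ℝ | Kt (t+1) = Kt t}ᶜ = {t : ℝ | Kt (t+1) = (Kt t)⁻¹} := by
      ext t
      simp only [Set.mem_compl_iff, Set.mem_setOf_eq]
      constructor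
      · intro hA
        rcases hcover t with h | h
        · exact absurd h hA
        · exact h
      · intro hC hA
        exact hdisj t hA hC
    have hAopen : IsOpen {t : ℝ | Kt (t+1) = Kt t} :=
      isClosed_compl_iff.mp (hcompl ▸ hCclosed)
    rcases isClopen_iff.mp ⟨hAclosed, hAopen⟩ with hA | hA
    · -- A empty: Kt (t+1) = (Kt t)⁻¹ for all t
      have hC : ∀ t, Kt (t+1) = (Kt t)⁻¹ := by
        intro t
        have : t ∈ {t : ℝ | Kt (t+1) = Kt t}ᶜ := by rw [hA]; simp
        rwa [hcompl] at this
      have hg : ∀ t, deriv Kt (t+1) / Kt (t+1) = -(deriv Kt t / Kt t) := by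
        intro t
        have hinv : HasDerivAt (fun s => (Kt s)⁻¹) (-((Kt t)^2)⁻¹ * deriv Kt t) t :=
          (hasDerivAt_inv (h0 t)).comp t (hdiff t)
        have e1 : deriv Kt (t+1) = -((Kt t)^2)⁻¹ * deriv Kt t := by
          rw [← deriv_comp_add_const Kt 1 t,
            show (fun s => Kt (s+1)) = fun s => (Kt s)⁻¹ from funext hC]
          exact hinv.deriv
        rw [e1, hC t]
        field_simp
      have hcg : Continuous fun t => deriv Kt t / Kt t :=
        (hKt1.continuous_deriv le_rfl).div hKt1.continuous h0
      have h12 : (∫ t in (1:ℝ)..2, deriv Kt t / Kt t)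
          = -(∫ t in (0:ℝ)..1, deriv Kt t / Kt t) := by
        have hsub := intervalIntegral.integral_comp_add_right
          (a := (0:ℝ)) (b := 1) (fun t => deriv Kt t / Kt t) 1
        norm_num at hsub
        rw [← hsub,
          intervalIntegral.integral_congr (g := fun t => -(deriv Kt t / Kt t))
            (fun t _ => hg t),
          intervalIntegral.integral_neg]
      have htot : (∫ t in (0:ℝ)..2, deriv Kt t / Kt t) = 0 := by
        rw [← intervalIntegral.integral_add_adjacent_intervals
          (hcg.intervalIntegrable 0 1) (hcg.intervalIntegrable 1 2), h12]
        ring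
      rw [htot] at hwt
      have : (wt : ℂ) = 0 := by
        rcases mul_eq_zero.mp hwt.symm with h | h
        · exact absurd h two_pi_I_ne
        · exact h
      exact_mod_cast this
    · -- A = univ: period-1 lift, contradiction with oddness
      have hper1 : Kt 1 = Kt 0 := by
        have : (0:ℝ) ∈ {t : ℝ | Kt (t+1) = Kt t} := by rw [hA]; trivial
        simpa using this
      obtain ⟨a, b, n, hn, hea, heb⟩ :=
        lift_relation K Kt hKtc h0 h1 hm1 hB hper1 wE wM hwE hwM
      obtain ⟨k, hk⟩ := hodd
      omega
  · -- even case
    intro _ Kt hKtc h0 hB hper1 wt hwt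
    have h1 : ∀ t, Kt t ≠ 1 := fun t h => hM t (by rw [← hB t, h]; norm_num)
    have hm1 : ∀ t, Kt t ≠ -1 := fun t h => hE t (by rw [← hB t, h]; norm_num)
    obtain ⟨a, b, n, hn, hea, heb⟩ :=
      lift_relation K Kt hKtc h0 h1 hm1 hB (by simpa using hper1 0) wE wM hwE hwM
    have hnwt : n = wt := by
      have : (n : ℂ) = (wt : ℂ) := mul_left_cancel₀ two_pi_I_ne (hn.symm.trans hwt)
      exact_mod_cast this
    omega
end

section
/- Suppose J⁺-invariants of four immersed loops K, K₁, K₂ and their images under the inversion φ(z)=1/z satisfy: (i) J⁺(φ(γ)) - J⁺(γ) = 2 w₀(γ)(r(γ) - w₀(γ)) for γ ∈ {K, K₁, K₂}; (ii) φ(K) = φ(K₁) # φ(K₂) with J⁺ additive under connected sum: J⁺(φ(K)) = J⁺(φ(K₁)) + J⁺(φ(K₂)); (iii) w₀(K₂) = 0, w₀(K) = w₀(K₁), and r(K) = r(K₁) + r(K₂) + 1. Then J⁺(K) = J⁺(K₁) + J⁺(K₂) - 2 w₀(K₁)(r(K₂) + 1). In particular J⁺(K) ≡ J⁺(K₁)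 + J⁺(K₂) modulo 2|w₀(K₁)|. -/
/-- The interior connected sum formula. Given integer invariants `J⁺`, winding numbers
`w₀` and rotation numbers `r` of loops `K, K₁, K₂` and their inversions `φ(K), φ(K₁),
φ(K₂)` satisfying: (i) `J⁺(φ(γ)) - J⁺(γ) = 2w₀(γ)(r(γ) - w₀(γ))` for `γ ∈ {K, K₁, K₂}`;
(ii) `J⁺(φ(K)) = J⁺(φ(K₁)) + J⁺(φ(K₂))` (additivity under connected sum); (iii)
`w₀(K₂) = 0`, `w₀(K) = w₀(K₁)`, `r(K) = r(K₁) + r(K₂) + 1`; then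
`J⁺(K) = J⁺(K₁) + J⁺(K₂) - 2w₀(K₁)(r(K₂)+1)`, so in particular
`J⁺(K) ≡ J⁺(K₁) + J⁺(K₂) mod 2|w₀(K₁)|`. -/
theorem interior_connected_sum_formula
    (JK JK₁ JK₂ JφK JφK₁ JφK₂ wK wK₁ wK₂ rK rK₁ rK₂ : ℤ)
    (h₁ : JφK - JK = 2 * wK * (rK - wK))
    (h₂ : JφK₁ - JK₁ = 2 * wK₁ * (rK₁ - wK₁))
    (h₃ : JφK₂ - JK₂ = 2 * wK₂ * (rK₂ - wK₂))
    (hadd : JφK = JφK₁ + JφK₂)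
    (hw₂ : wK₂ = 0) (hw : wK = wK₁) (hr : rK = rK₁ + rK₂ + 1) :
    JK = JK₁ + JK₂ - 2 * wK₁ * (rK₂ + 1) ∧
    (2 * |wK₁|) ∣ (JK - (JK₁ + JK₂)) := by
  subst hw₂ hw hr
  have hformula : JK = JK₁ + JK₂ - 2 * wK * (rK₂ + 1) := by
    linear_combination hadd - h₁ + h₂ + h₃
  have hdefect : JK - (JK₁ + JK₂) = 2 * wK * -(rK₂ + 1) := by
    rw [hformula]; ring
  refine ⟨hformula, ?_⟩
  rw [hdefect]
  exact (mul_dvd_mul_left 2 (abs_dvd_self wK)).mul_right _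
end

section
/- Consider the system of four integer-linear expressions in six even-integer variables j₀¹, j₀², j_E¹, j_E², j_M¹, j_M² (with fixed integer parameters w₀ = 2w̄₀, w_E, w_M): A₀ = j₀¹ + j_E¹ + j_M¹ + w₀(w_E + w_M), A_E = j₀² + j_E² + j_M¹ + w̄₀(w̄₀ + w_M), A_M = j₀² + j_E¹ + j_M² + w̄₀(w̄₀ + w_E), A_{EM} = j₀¹ + j_E² + j_M² - w₀². Then: (a) when all jᵢ are even and w_E, w_M are even, A₀ + A_E + A_M + A_{EM} ≡ w̄₀(2w̄₀ + w_E + w_M) (mod 4); (b) by varying the six even variables, (A₀, A_E, A_M, A_{EM}) can be changed by exactly those quadruples (a₀, a_E, a_M, a_{EM}) of even integers satisfying a₀ + a_E + a_M + a_{EM} ≡ 0 (mod 4). -/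
/-- Linear-algebra core of the realization of the four `J⁺`-like invariants in the
even-even case. With `w₀ = 2w̄₀` and `w_E, w_M` even, and the four expressions
`A₀ = j₀¹ + j_E¹ + j_M¹ + w₀(w_E + w_M)`, `A_E = j₀² + j_E² + j_M¹ + w̄₀(w̄₀ + w_M)`,
`A_M = j₀² + j_E¹ + j_M² + w̄₀(w̄₀ + w_E)`, `A_{EM} = j₀¹ + j_E² + j_M² - w₀²`:
(a) for even `jᵢ`, `A₀ + A_E + A_M + A_{EM} ≡ w̄₀(2w̄₀ + w_E + w_M) (mod 4)`;
(b) the image of `(2ℤ)⁶` under `(j's) ↦ (j₀¹+j_E¹+j_M¹, j₀²+j_E²+j_M¹, j₀²+j_E¹+j_M²,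
j₀¹+j_E²+j_M²)` is exactly the set of quadruples of even integers with sum divisible
by `4`. -/
theorem realization_linear_core (wb wE wM : ℤ) (hwE : 2 ∣ wE) (hwM : 2 ∣ wM) :
    (∀ j01 j02 jE1 jE2 jM1 jM2 : ℤ,
      2 ∣ j01 → 2 ∣ j02 → 2 ∣ jE1 → 2 ∣ jE2 → 2 ∣ jM1 → 2 ∣ jM2 →
      (4 : ℤ) ∣ ((j01 + jE1 + jM1 + (2 * wb) * (wE + wM))
        + (j02 + jE2 + jM1 + wb * (wb + wM))
        + (j02 + jE1 + jM2 + wb * (wb + wE))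
        + (j01 + jE2 + jM2 - (2 * wb) ^ 2)
        - wb * (2 * wb + wE + wM))) ∧
    (∀ a0 aE aM aEM : ℤ,
      ((∃ j01 j02 jE1 jE2 jM1 jM2 : ℤ,
          2 ∣ j01 ∧ 2 ∣ j02 ∧ 2 ∣ jE1 ∧ 2 ∣ jE2 ∧ 2 ∣ jM1 ∧ 2 ∣ jM2 ∧
          a0 = j01 + jE1 + jM1 ∧ aE = j02 + jE2 + jM1 ∧
          aM = j02 + jE1 + jM2 ∧ aEM = j01 + jE2 + jM2)
        ↔ (2 ∣ a0 ∧ 2 ∣ aE ∧ 2 ∣ aM ∧ 2 ∣ aEM ∧ 4 ∣ (a0 + aE + aM + aEM)))) := by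
  constructor
  · rintro _ _ _ _ _ _ ⟨x1, rfl⟩ ⟨x2, rfl⟩ ⟨x3, rfl⟩ ⟨x4, rfl⟩ ⟨x5, rfl⟩ ⟨x6, rfl⟩
    obtain ⟨e, rfl⟩ := hwE
    obtain ⟨m, rfl⟩ := hwM
    exact ⟨x1 + x2 + x3 + x4 + x5 + x6 + wb * e + wb * m - wb ^ 2, by ring⟩
  · intro a0 aE aM aEM
    constructor
    · rintro ⟨j01, j02, jE1, jE2, jM1, jM2, h1, h2, h3, h4, h5, h6, rfl, rfl, rfl, rfl⟩
      omega
    · rintro ⟨h0, hE, hM, hEM, h4⟩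
      refine ⟨a0, (a0 + aE + aM - aEM) / 2, 0, aE - (a0 + aE + aM - aEM) / 2,
        0, aM - (a0 + aE + aM - aEM) / 2, ?_, ?_, ?_, ?_, ?_, ?_, ?_, ?_, ?_, ?_⟩ <;> omega
end
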